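/- Lifting lemma for matching through an injective environment encoding: let E be as in the injectivity lemma (mapping distinct names to patterns with distinct name-function head symbols), extended homomorphically to terms. If M' is a closed term, M is a term (possibly with variables), and σ is a substitution on patterns with E(M') = σ(E(M)), then there exists a substitution σ' on terms such that M' = σ'(M) and for every variable x occurring in M, E(σ'(x)) = σ(x). -/

import Mathlib

/-- First-order terms over function symbols `F`, with natural-number variables. -/
inductive Trm (F : Type) : Type
  | var : Nat → Trm F
  | app : F → List (Trm F) → Trm F

namespace Trm

variable {F : Type}

/-- Homomorphic extension of a substitution to terms. -/
def subst (σ : Nat → Trm F) : Trm F → Trm F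
  | var x => σ x
  | app f ts => app f (ts.attach.map (fun t => subst σ t.1))
decreasing_by
  simp_wf
  have := List.sizeOf_lt_of_mem t.2
  omega

/-- `VarOcc x t` : variable `x` occurs in term `t`. -/
inductive VarOcc (x : Nat) : Trm F → Prop
  | var : VarOcc x (var x)
  | app {f : F} {ts : List (Trm F)} {t : Trm F} : t ∈ ts → VarOcc x t → VarOcc x (app f ts)

end Trm

/-- A term is closed when no variable occurs in it. -/
def ClosedT {F : Type} (t : Trm F) : Prop := ∀ x, ¬ Trm.VarOcc x t

/-- A fact is an atom `P(t1,...,tn)`. -/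
structure Fct (P F : Type) where
  pred : P
  args : List (Trm F)

def Fct.subst {P F : Type} (σ : Nat → Trm F) (a : Fct P F) : Fct P F :=
  ⟨a.pred, a.args.map (Trm.subst σ)⟩

def Fct.Closed {P F : Type} (a : Fct P F) : Prop := ∀ t ∈ a.args, ClosedT t

def Fct.VarOcc {P F : Type} (x : Nat) (a : Fct P F) : Prop := ∃ t ∈ a.args, Trm.VarOcc x t

/-- A Horn clause: a finite multiset of hypotheses and a conclusion. -/
structure Clause (P F : Type) where
  hyp : Multiset (Fct P F)
  concl : Fct P F

/-- `(H1 ⇒ C1)` subsumes `(H2 ⇒ C2)` iff some substitution σ has `σ C1 = C2` and `σ H1 ⊆ H2`. -/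
def Subsumes {P F : Type} (c1 c2 : Clause P F) : Prop :=
  ∃ σ : Nat → Trm F, Fct.subst σ c1.concl = c2.concl ∧ c1.hyp.map (Fct.subst σ) ≤ c2.hyp

/-- Terms built from variables, names, and function symbols. -/
inductive NTrm (F N : Type) : Type
  | var : Nat → NTrm F N
  | nm : N → NTrm F N
  | app : F → List (NTrm F N) → NTrm F N

namespace NTrm

variable {F N : Type}

/-- Substitutions act on variables only (leaving names fixed), extended homomorphically. -/
def subst (σ : Nat → NTrm F N) : NTrm F N → NTrm F N
  | var x => σ x
  | nm a => nm a
  | app f ts => app f (ts.attach.map (fun t => subst σ t.1))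
decreasing_by
  simp_wf
  have := List.sizeOf_lt_of_mem t.2
  omega

/-- An environment `E` acts on names only (leaving variables fixed), extended homomorphically. -/
def applyEnv (E : N → NTrm F N) : NTrm F N → NTrm F N
  | var x => var x
  | nm a => E a
  | app f ts => app f (ts.attach.map (fun t => applyEnv E t.1))
decreasing_by
  simp_wf
  have := List.sizeOf_lt_of_mem t.2
  omega

/-- `VarOcc x t` : variable `x` occurs in term `t`. -/
inductive VarOcc (x : Nat) : NTrm F N → Prop
  | var : VarOcc x (var x)
  | app {f : F} {ts : List (NTrm F N)} {t : NTrm F N} :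
      t ∈ ts → VarOcc x t → VarOcc x (app f ts)

end NTrm

/-- Encoding of terms (with variables and names) into patterns over `F ⊕ N`:
variables are fixed, each name `a` is replaced by the pattern `E a`, and the encoding acts
homomorphically on function applications. -/
def encodeN {F N : Type} (E : N → Trm (F ⊕ N)) : NTrm F N → Trm (F ⊕ N)
  | .var x => Trm.var x
  | .nm a => E a
  | .app f ts => Trm.app (Sum.inl f) (ts.attach.map (fun t => encodeN E t.1))
decreasing_by
  simp_wf
  have := List.sizeOf_lt_of_mem t.2
  omega

/-!
Decoding reads a pattern back as a term: a subpattern headed by the name-function symbol of `a`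
is read as the name `a`, whatever its arguments. Since `E a` is headed by that symbol, decoding
is a left inverse of the encoding, and it turns `σ (E M)` into `(decode ∘ σ) M` for every `M`;
so `σ' := decode ∘ σ` matches `M` onto `decode (E M') = M'`. Moreover every subpattern of an
encoding that sits at a variable position of `M` is itself an encoding, hence equal to the
encoding of its decoding.
-/

section Lifting

variable {F N : Type}

@[simp]
theorem Trm.subst_var (σ : Nat → Trm F) (x : Nat) : Trm.subst σ (.var x) = σ x := by
  rw [Trm.subst]

@[simp]
theorem Trm.subst_app (σ : Nat → Trm F) (f : F) (ts : List (Trm F)) :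
    Trm.subst σ (.app f ts) = .app f (ts.map (Trm.subst σ)) := by
  rw [Trm.subst]; simp

@[simp]
theorem NTrm.subst_var (σ : Nat → NTrm F N) (x : Nat) : NTrm.subst σ (.var x) = σ x := by
  rw [NTrm.subst]

@[simp]
theorem NTrm.subst_nm (σ : Nat → NTrm F N) (a : N) : NTrm.subst σ (.nm a) = .nm a := by
  rw [NTrm.subst]

@[simp]
theorem NTrm.subst_app (σ : Nat → NTrm F N) (f : F) (ts : List (NTrm F N)) :
    NTrm.subst σ (.app f ts) = .app f (ts.map (NTrm.subst σ)) := by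
  rw [NTrm.subst]; simp

@[simp]
theorem encodeN_var (E : N → Trm (F ⊕ N)) (x : Nat) : encodeN E (.var x) = .var x := by
  rw [encodeN]

@[simp]
theorem encodeN_nm (E : N → Trm (F ⊕ N)) (a : N) : encodeN E (.nm a) = E a := by
  rw [encodeN]

@[simp]
theorem encodeN_app (E : N → Trm (F ⊕ N)) (f : F) (ts : List (NTrm F N)) :
    encodeN E (.app f ts) = .app (.inl f) (ts.map (encodeN E)) := by
  rw [encodeN]; simp

def decodeN : Trm (F ⊕ N) → NTrm F N
  | .var x => .var x
  | .app (.inl f) ts => .app f (ts.map decodeN)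
  | .app (.inr a) _ => .nm a

theorem decodeN_encodeN (E : N → Trm (F ⊕ N))
    (hEhead : ∀ a : N, ∃ args : List (Trm (F ⊕ N)), E a = Trm.app (Sum.inr a) args) :
    ∀ M : NTrm F N, decodeN (encodeN E M) = M
  | .var x => by simp [decodeN]
  | .nm a => by
    obtain ⟨args, ha⟩ := hEhead a
    simp [ha, decodeN]
  | .app f ts => by
    simp only [encodeN_app, decodeN, List.map_map, NTrm.app.injEq, true_and]
    exact (List.map_congr_left fun t _ => decodeN_encodeN E hEhead t).trans (List.map_id ts)

theorem decodeN_subst_encodeN (E : N → Trm (F ⊕ N))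
    (hEhead : ∀ a : N, ∃ args : List (Trm (F ⊕ N)), E a = Trm.app (Sum.inr a) args)
    (σ : Nat → Trm (F ⊕ N)) :
    ∀ M : NTrm F N, decodeN (Trm.subst σ (encodeN E M)) = NTrm.subst (decodeN ∘ σ) M
  | .var x => by simp
  | .nm a => by
    obtain ⟨args, ha⟩ := hEhead a
    simp [ha, decodeN]
  | .app f ts => by
    simp only [encodeN_app, Trm.subst_app, decodeN, NTrm.subst_app, List.map_map,
      NTrm.app.injEq, true_and]
    exact List.map_congr_left fun t _ => decodeN_subst_encodeN E hEhead σ t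

theorem encodeN_decodeN_of_varOcc (E : N → Trm (F ⊕ N)) (σ : Nat → Trm (F ⊕ N)) {x : Nat} :
    ∀ {M : NTrm F N}, NTrm.VarOcc x M →
      encodeN E (decodeN (Trm.subst σ (encodeN E M))) = Trm.subst σ (encodeN E M) →
      encodeN E (decodeN (σ x)) = σ x
  | _, .var, h => by simpa using h
  | .app f ts, .app (t := t) ht hx, h => by
    simp only [encodeN_app, Trm.subst_app, decodeN, List.map_map, Trm.app.injEq, true_and] at h
    exact encodeN_decodeN_of_varOcc E σ hx (List.map_inj_left.mp h t ht)

end Lifting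

theorem encode_lifting_general {F N : Type} (E : N → Trm (F ⊕ N))
    (hEhead : ∀ a : N, ∃ args : List (Trm (F ⊕ N)), E a = Trm.app (Sum.inr a) args)
    (M M' : NTrm F N)
    (σ : Nat → Trm (F ⊕ N))
    (h : encodeN E M' = Trm.subst σ (encodeN E M)) :
    ∃ σ' : Nat → NTrm F N,
      M' = NTrm.subst σ' M ∧ ∀ x : Nat, NTrm.VarOcc x M → encodeN E (σ' x) = σ x := by
  have hdecode : decodeN (encodeN E M') = M' := decodeN_encodeN E hEhead M'
  refine ⟨decodeN ∘ σ, ?_, fun x hx => encodeN_decodeN_of_varOcc E σ hx ?_⟩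
  · rw [← decodeN_subst_encodeN E hEhead, ← h, hdecode]
  · rw [← h, hdecode]

/-- Lifting lemma for matching through an injective environment encoding: if `E` maps each
name `a` to a closed pattern headed by the name-function symbol of `a`, `M'` is a closed
term, and `σ` is a substitution on patterns with `E(M') = σ(E(M))`, then there is a
substitution `σ'` on terms with `M' = σ'(M)` and `E(σ'(x)) = σ(x)` for every variable `x`
occurring in `M`. -/
theorem encode_lifting {F N : Type} (E : N → Trm (F ⊕ N))
    (hEhead : ∀ a : N, ∃ args : List (Trm (F ⊕ N)), E a = Trm.app (Sum.inr a) args)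
    (hEclosed : ∀ a : N, ∀ x : Nat, ¬ Trm.VarOcc x (E a))
    (M M' : NTrm F N)
    (hM' : ∀ x : Nat, ¬ NTrm.VarOcc x M')
    (σ : Nat → Trm (F ⊕ N))
    (h : encodeN E M' = Trm.subst σ (encodeN E M)) :
    ∃ σ' : Nat → NTrm F N,
      M' = NTrm.subst σ' M ∧ ∀ x : Nat, NTrm.VarOcc x M → encodeN E (σ' x) = σ x :=
  encode_lifting_general E hEhead M M' σ h
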